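/- Let a loony endgame configuration of Dots & Boxes have k nodes of degree greater than 2 in its dual graph (boxes or the outer face), with T the sum of the degrees of these nodes, and suppose every chain has both of its ends attached to such high-degree nodes. In any complete play of the endgame in which one player only makes loony moves opening chains and cycles and the other player claims each opened chain or cycle entirely (up to double-dealing moves), the number ℓ of chain-opening moves satisfies T = 2ℓ + 2k; in particular, ℓ is the same for every such play. -/

import Mathlib

/-!
A loony endgame configuration of Dots & Boxes, described through the high-degree
nodes of its dual graph: `J` is the (finite) set of nodes (boxes or the outer
face) of degree greater than 2, with degree function `deg : J → ℕ`.  One player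
only makes loony moves opening chains and cycles, and the other player claims
each opened chain or cycle entirely (up to double-dealing moves).  Opening a
chain removes one unit of degree from each of the two high-degree nodes at its
ends (every chain has both of its ends attached to high-degree nodes); opening a
cycle leaves the degrees unchanged.  A node that drops to degree 2 joins a chain
or cycle and is no longer high-degree; the play is complete when every node of
`J` has dropped to degree exactly 2.
-/

/-- An opening move: either open a chain, whose two ends are attached to the
high-degree nodes `e₁` and `e₂`, or open a cycle. -/
inductive Opening (J : Type) where
  | chain (e₁ e₂ : J)
  | cyc

variable {J : Type} [DecidableEq J]

/-- Opening a chain decreases the degree of each of its two end nodes by one;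
opening a cycle leaves the degrees unchanged. -/
def degStep (s : J → ℕ) : Opening J → J → ℕ
  | .chain e₁ e₂ => fun j => s j - (if j = e₁ then 1 else 0) - (if j = e₂ then 1 else 0)
  | .cyc => s

/-- The degrees of the high-degree nodes after a sequence of openings. -/
def degAfter (s : J → ℕ) : List (Opening J) → J → ℕ
  | [] => s
  | o :: os => degAfter (degStep s o) os

/-- A play is valid when every opened chain has both of its ends attached to
nodes whose current degree is greater than 2. -/
def ValidPlay : (J → ℕ) → List (Opening J) → Prop
  | _, [] => True
  | s, Opening.chain e₁ e₂ :: os =>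
      2 < s e₁ ∧ 2 < s e₂ ∧ ValidPlay (degStep s (Opening.chain e₁ e₂)) os
  | s, Opening.cyc :: os => ValidPlay (degStep s Opening.cyc) os

/-- A play is complete when every high-degree node has dropped to degree
exactly 2 (so that it has merged into a chain or cycle). -/
def CompletePlay (s : J → ℕ) (os : List (Opening J)) : Prop :=
  ∀ j, degAfter s os j = 2

/-- The number of chain-opening moves in a play. -/
def chainCount (os : List (Opening J)) : ℕ :=
  os.countP fun o => match o with | .chain _ _ => true | .cyc => false

lemma degStep_chain_add_ite {s : J → ℕ} {e₁ e₂ : J} (h₁ : 2 ≤ s e₁) (h₂ : 2 ≤ s e₂) (j : J) :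
    degStep s (.chain e₁ e₂) j + ((if j = e₁ then 1 else 0) + (if j = e₂ then 1 else 0)) = s j := by
  simp only [degStep]
  split_ifs <;> subst_vars <;> omega

lemma sum_degStep_chain [Fintype J] {s : J → ℕ} {e₁ e₂ : J} (h₁ : 2 ≤ s e₁) (h₂ : 2 ≤ s e₂) :
    ∑ j, degStep s (.chain e₁ e₂) j + 2 = ∑ j, s j := by
  calc ∑ j, degStep s (.chain e₁ e₂) j + 2
      = ∑ j, (degStep s (.chain e₁ e₂) j +
          ((if j = e₁ then 1 else 0) + (if j = e₂ then 1 else 0))) := by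
        simp [Finset.sum_add_distrib]
    _ = ∑ j, s j := by simp_rw [degStep_chain_add_ite h₁ h₂]

lemma ValidPlay.sum_degAfter_add_two_mul_chainCount [Fintype J] {s : J → ℕ}
    {os : List (Opening J)} (hvalid : ValidPlay s os) :
    ∑ j, degAfter s os j + 2 * chainCount os = ∑ j, s j := by
  induction os generalizing s with
  | nil => simp [degAfter, chainCount]
  | cons o os ih =>
    cases o with
    | chain e₁ e₂ =>
      obtain ⟨h₁, h₂, hrest⟩ := hvalid
      have hstep := sum_degStep_chain h₁.le h₂.le
      have hrest_sum := ih hrest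
      simp only [degAfter, chainCount, List.countP_cons_of_pos] at hrest_sum ⊢
      omega
    | cyc => simpa [degAfter, degStep, chainCount] using ih hvalid

lemma CompletePlay.sum_eq_two_mul_chainCount_add [Fintype J] {s : J → ℕ} {os : List (Opening J)}
    (hvalid : ValidPlay s os) (hcomplete : CompletePlay s os) :
    ∑ j, s j = 2 * chainCount os + 2 * Fintype.card J := by
  have hfinal : ∑ j, degAfter s os j = 2 * Fintype.card J := by
    rw [Finset.sum_congr rfl fun j _ => hcomplete j, Finset.sum_const, smul_eq_mul, Finset.card_univ,
      mul_comm]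
  have := hvalid.sum_degAfter_add_two_mul_chainCount
  omega

theorem chain_openings_count_general [Fintype J]
    (deg : J → ℕ)
    (k T : ℕ) (hk : k = Fintype.card J) (hT : T = ∑ j, deg j)
    (os : List (Opening J))
    (hvalid : ValidPlay deg os) (hcomplete : CompletePlay deg os) :
    T = 2 * chainCount os + 2 * k ∧
      ∀ os' : List (Opening J), ValidPlay deg os' → CompletePlay deg os' →
        chainCount os' = chainCount os := by
  subst hk hT
  have hcount := hcomplete.sum_eq_two_mul_chainCount_add hvalid
  refine ⟨hcount, fun os' hvalid' hcomplete' => ?_⟩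
  have hcount' := hcomplete'.sum_eq_two_mul_chainCount_add hvalid'
  omega

/-- If the dual graph of a loony endgame configuration has `k`
nodes of degree greater than 2, of total degree `T`, and every chain has both of
its ends attached to such high-degree nodes, then in any complete play of the
endgame the number `ℓ` of chain-opening moves satisfies `T = 2ℓ + 2k`; in
particular `ℓ` is the same for every such play. -/
theorem chain_openings_count [Fintype J]
    (deg : J → ℕ) (hdeg : ∀ j, 2 < deg j)
    (k T : ℕ) (hk : k = Fintype.card J) (hT : T = ∑ j, deg j)
    (os : List (Opening J))
    (hvalid : ValidPlay deg os) (hcomplete : CompletePlay deg os) :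
    T = 2 * chainCount os + 2 * k ∧
      ∀ os' : List (Opening J), ValidPlay deg os' → CompletePlay deg os' →
        chainCount os' = chainCount os :=
  chain_openings_count_general deg k T hk hT os hvalid hcomplete
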